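/- Let p be a prime, β ≥ 2, n ≥ 2 integers, and m an integer coprime to p. Then Σ over coprime residues x mod p^β of Kl_n(x, p^β)·(Kl_n(mx, p^β) + Kl_n(−mx, p^β)) equals p^{βn}·(2/φ(p^β))·Σ over primitive even Dirichlet characters χ mod p^β of χ̄(m). -/

import Mathlib

open scoped Classical
open Finset Complex

noncomputable def eRat (x : ℚ) : ℂ := Complex.exp (2 * Real.pi * Complex.I * (x : ℂ))

noncomputable def eZMod (q : ℕ) [NeZero q] (a : ZMod q) : ℂ := eRat ((a.val : ℚ) / q)

/-- The hyper-Kloosterman sum `Kl_n(r, q)`. -/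
noncomputable def Kl (q : ℕ) [NeZero q] (n : ℕ) (r : ZMod q) : ℂ :=
  ∑ x ∈ Finset.univ.filter (fun x : Fin n → ZMod q => ∏ i, x i = r),
    eZMod q (∑ i, x i)

/-!
Summing `χ(c) Kl_n(c, q)` over `c` turns the hyper-Kloosterman sum into the `n`-th power of the
Gauss sum `τ(χ)`, so by orthogonality of characters `Kl_n(c, q) = φ(q)⁻¹ ∑_χ χ̄(c) τ(χ)ⁿ` for a
unit `c`, and the correlation `∑_x Kl_n(x, q) Kl_n(wx, q)` equals
`φ(q)⁻¹ ∑_χ χ̄(w) (τ(χ) τ(χ̄))ⁿ`. Fourier inversion gives `τ(χ) τ(χ̄) = χ(-1) q` for primitive `χ`.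
For `q = p^β` with `β ≥ 2` an imprimitive `χ` is invariant under translation by the nilpotent
element `p^(β-1)`, which the additive character is not, so `τ(χ) = 0`. Adding the correlations
for `w = m` and `w = -m` then kills the odd characters and doubles the even ones.
-/

open ZMod DirichletCharacter

lemma DirichletCharacter.IsPrimitive.gaussSum_mul_gaussSum_inv {N : ℕ} [NeZero N]
    {χ : DirichletCharacter ℂ N} (hχ : χ.IsPrimitive) :
    gaussSum χ stdAddChar * gaussSum χ⁻¹ stdAddChar = χ (-1) * N := by
  have hinv := congrFun (dft_dft (χ : ZMod N → ℂ)) (-1)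
  simp only [neg_neg, map_one, smul_eq_mul, mul_one, dft_apply,
    hχ.fourierTransform_eq_inv_mul_gaussSum] at hinv
  have hsum : ∑ j : ZMod N, stdAddChar (-(j * -1)) * (χ⁻¹ (-j) * gaussSum χ stdAddChar)
      = χ⁻¹ (-1) * (gaussSum χ stdAddChar * ∑ j, χ⁻¹ j * stdAddChar j) := by
    rw [mul_sum, mul_sum]
    refine sum_congr rfl fun j _ => ?_
    rw [mul_neg_one, neg_neg, neg_eq_neg_one_mul j, map_mul]
    ring
  rw [hsum] at hinv
  have hsign : χ (-1) * χ⁻¹ (-1) = 1 := by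
    rw [← MulChar.mul_apply, mul_inv_cancel, MulChar.one_apply isUnit_one.neg]
  rw [← hinv, ← mul_assoc, hsign, one_mul]
  rfl

lemma DirichletCharacter.FactorsThrough.map_add_of_isNilpotent {R : Type*}
    [CommMonoidWithZero R] {N : ℕ} {χ : DirichletCharacter R N} {d : ℕ} (hχ : χ.FactorsThrough d)
    {a : ZMod N} (ha : IsNilpotent a) (had : (cast a : ZMod d) = 0) (y : ZMod N) :
    χ (y + a) = χ y := by
  by_cases hy : IsUnit y
  · obtain ⟨v, hv⟩ := ha.isUnit_add_left_of_commute hy (Commute.all _ _)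
    obtain ⟨u, rfl⟩ := hy
    rw [hχ.eq_changeLevel, ← hv, changeLevel_eq_cast_of_dvd, changeLevel_eq_cast_of_dvd, hv,
      cast_add hχ.dvd, had, add_zero]
  · have hya : ¬IsUnit (y + a) := fun h =>
      hy (by simpa using ha.neg.isUnit_add_left_of_commute h (Commute.all _ _))
    rw [MulChar.map_nonunit _ hy, MulChar.map_nonunit _ hya]

lemma gaussSum_eq_zero_of_factorsThrough {R : Type*} [CommRing R] [IsDomain R] {N : ℕ}
    [NeZero N] {χ : DirichletCharacter R N} {d : ℕ} (hχ : χ.FactorsThrough d)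
    (ψ : AddChar (ZMod N) R) {a : ZMod N} (ha : IsNilpotent a) (had : (cast a : ZMod d) = 0)
    (hψa : ψ a ≠ 1) :
    gaussSum χ ψ = 0 := by
  have hshift : gaussSum χ ψ = ψ a * gaussSum χ ψ := by
    calc gaussSum χ ψ = ∑ y, χ (y + a) * ψ (y + a) :=
          (Equiv.sum_comp (Equiv.addRight a) fun y => χ y * ψ y).symm
      _ = ψ a * gaussSum χ ψ := by
          simp only [gaussSum, mul_sum, hχ.map_add_of_isNilpotent ha had, AddChar.map_add_eq_mul]
          exact sum_congr rfl fun y _ => by ring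
  have h : (1 - ψ a) * gaussSum χ ψ = 0 := by rw [sub_mul, one_mul, ← hshift, sub_self]
  exact (mul_eq_zero.mp h).resolve_left (sub_ne_zero.mpr hψa.symm)

lemma gaussSum_eq_zero_of_not_isPrimitive {p β : ℕ} [hp : Fact p.Prime] (hβ : 2 ≤ β)
    {χ : DirichletCharacter ℂ (p ^ β)} (hχ : ¬χ.IsPrimitive) :
    gaussSum χ stdAddChar = 0 := by
  have hcond : χ.conductor ∣ p ^ (β - 1) := by
    obtain ⟨i, hi, hc⟩ := (Nat.dvd_prime_pow hp.out).mp χ.conductor_dvd_level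
    have hiβ : i ≠ β := fun h => hχ (by rw [isPrimitive_def, hc, h])
    exact hc ▸ pow_dvd_pow p (by omega)
  have hχ' : χ.FactorsThrough (p ^ (β - 1)) :=
    FactorsThrough.mono χ χ.factorsThrough_conductor hcond (pow_dvd_pow p (Nat.sub_le β 1))
  refine gaussSum_eq_zero_of_factorsThrough hχ' stdAddChar
    (a := ((p ^ (β - 1) : ℕ) : ZMod (p ^ β))) ⟨2, ?_⟩ ?_ ?_
  · rw [← Nat.cast_pow, ← pow_mul, natCast_eq_zero_iff]
    exact pow_dvd_pow p (by omega)
  · rw [cast_natCast hχ'.dvd, natCast_self]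
  · rw [← AddChar.map_zero_eq_one (stdAddChar (N := p ^ β)), injective_stdAddChar.ne_iff, Ne,
      natCast_eq_zero_iff]
    exact fun h => absurd (Nat.le_of_dvd (pow_pos hp.out.pos _) h)
      (not_le.mpr (pow_lt_pow_right₀ hp.out.one_lt (by omega)))

lemma AddChar.map_sum_eq_prod {A M ι : Type*} [AddCommMonoid A] [CommMonoid M]
    (ψ : AddChar A M) (s : Finset ι) (f : ι → A) :
    ψ (∑ i ∈ s, f i) = ∏ i ∈ s, ψ (f i) := by
  induction s using Finset.cons_induction with
  | empty => simp
  | cons i s hi ih => rw [sum_cons, prod_cons, ψ.map_add_eq_mul, ih]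

lemma MulChar.sum_units_mul {R R' : Type*} [CommMonoid R] [Fintype R] [DecidableEq R]
    [CommSemiring R'] (χ : MulChar R R') (f : R → R') :
    ∑ u : Rˣ, χ u * f u = ∑ a, χ a * f a :=
  Fintype.sum_of_injective _ Units.val_injective _ _
    (fun a ha => by rw [χ.map_nonunit fun hu => ha hu, zero_mul]) fun _ => rfl

lemma ZMod.mulChar_inv_apply_of_isUnit {q : ℕ} {R : Type*} [CommGroupWithZero R]
    (χ : MulChar (ZMod q) R) {c : ZMod q} (hc : IsUnit c) : χ⁻¹ c = χ c⁻¹ := by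
  rw [MulChar.inv_apply_eq_inv', inv_eq_of_mul_eq_one_left (by rw [← map_mul,
    inv_mul_of_unit c hc, map_one])]

section Kloosterman

variable {q : ℕ} [NeZero q] (n : ℕ)

lemma eZMod_eq_stdAddChar (a : ZMod q) : eZMod q a = stdAddChar a := by
  conv_rhs => rw [← natCast_rightInverse a, ← Int.cast_natCast, stdAddChar_coe]
  unfold eZMod eRat
  push_cast
  rw [mul_div_assoc]

lemma sum_mul_Kl (g : ZMod q → ℂ) :
    ∑ c, g c * Kl q n c = ∑ a : Fin n → ZMod q, g (∏ i, a i) * stdAddChar (∑ i, a i) := by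
  rw [← sum_fiberwise univ (fun a : Fin n → ZMod q => ∏ i, a i)]
  refine sum_congr rfl fun c _ => ?_
  rw [Kl, mul_sum]
  refine sum_congr rfl fun a ha => ?_
  rw [(mem_filter.mp ha).2, eZMod_eq_stdAddChar]

lemma sum_char_mul_Kl (χ : DirichletCharacter ℂ q) :
    ∑ c, χ c * Kl q n c = gaussSum χ stdAddChar ^ n := by
  rw [sum_mul_Kl, gaussSum, Fintype.sum_pow]
  refine sum_congr rfl fun a _ => ?_
  rw [map_prod, AddChar.map_sum_eq_prod, prod_mul_distrib]

lemma Kl_eq_of_isUnit {c : ZMod q} (hc : IsUnit c) :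
    Kl q n c = (q.totient : ℂ)⁻¹ *
      ∑ χ : DirichletCharacter ℂ q, χ⁻¹ c * gaussSum χ stdAddChar ^ n := by
  have hφ : (q.totient : ℂ) ≠ 0 := by exact_mod_cast (Nat.totient_pos.mpr (NeZero.pos q)).ne'
  rw [eq_inv_mul_iff_mul_eq₀ hφ]
  calc (q.totient : ℂ) * Kl q n c
      = ∑ b, (if c = b then (q.totient : ℂ) else 0) * Kl q n b := by
        simp only [ite_mul, zero_mul, sum_ite_eq, mem_univ, if_true]
    _ = ∑ χ : DirichletCharacter ℂ q, χ⁻¹ c * ∑ b, χ b * Kl q n b := by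
        simp only [← sum_char_inv_mul_char_eq ℂ hc, sum_mul, mul_sum,
          mulChar_inv_apply_of_isUnit _ hc, mul_assoc]
        exact sum_comm
    _ = _ := by simp only [sum_char_mul_Kl]

lemma sum_Kl_mul_Kl_mul {w : ZMod q} (hw : IsUnit w) :
    ∑ x : (ZMod q)ˣ, Kl q n x * Kl q n (w * x) = (q.totient : ℂ)⁻¹ *
      ∑ χ : DirichletCharacter ℂ q,
        χ⁻¹ w * (gaussSum χ stdAddChar * gaussSum χ⁻¹ stdAddChar) ^ n := by
  have hmellin (χ : DirichletCharacter ℂ q) :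
      ∑ x : (ZMod q)ˣ, χ⁻¹ x * Kl q n x = gaussSum χ⁻¹ stdAddChar ^ n :=
    (MulChar.sum_units_mul χ⁻¹ (Kl q n)).trans (sum_char_mul_Kl n χ⁻¹)
  simp only [Kl_eq_of_isUnit n (hw.mul (Units.isUnit _)), map_mul, mul_sum]
  rw [sum_comm]
  refine sum_congr rfl fun χ _ => ?_
  rw [mul_pow, ← hmellin, mul_sum, mul_sum, mul_sum]
  refine sum_congr rfl fun x _ => ?_
  ring

end Kloosterman

lemma inv_add_inv_neg_mul_gaussSum_mul_pow {p β : ℕ} [Fact p.Prime] (hβ : 2 ≤ β) {n : ℕ}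
    (hn : n ≠ 0) (χ : DirichletCharacter ℂ (p ^ β)) (w : ZMod (p ^ β)) :
    (χ⁻¹ w + χ⁻¹ (-w)) * (gaussSum χ stdAddChar * gaussSum χ⁻¹ stdAddChar) ^ n =
      if χ.IsPrimitive ∧ χ.Even then 2 * (p : ℂ) ^ (β * n) * χ⁻¹ w else 0 := by
  by_cases hprim : χ.IsPrimitive
  · have hneg : χ⁻¹ (-w) = (χ (-1))⁻¹ * χ⁻¹ w := by
      rw [neg_eq_neg_one_mul w, map_mul, MulChar.inv_apply_eq_inv']
    rw [hprim.gaussSum_mul_gaussSum_inv, hneg]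
    rcases χ.even_or_odd with heven | hodd
    · rw [if_pos ⟨hprim, heven⟩, heven]
      push_cast
      ring
    · rw [if_neg fun h => χ.not_even_and_odd ⟨h.2, hodd⟩, hodd]
      ring
  · rw [if_neg fun h => hprim h.1, gaussSum_eq_zero_of_not_isPrimitive hβ hprim, zero_mul,
      zero_pow hn, mul_zero]

theorem stmt9 (p : ℕ) [Fact p.Prime] (β n : ℕ) (hβ : 2 ≤ β) (hn : 2 ≤ n)
    (m : ℤ) (hm : IsCoprime m (p : ℤ)) :
    (∑ x : (ZMod (p ^ β))ˣ,
        Kl (p ^ β) n (x : ZMod (p ^ β)) *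
          (Kl (p ^ β) n ((m : ZMod (p ^ β)) * x) +
            Kl (p ^ β) n (-((m : ZMod (p ^ β)) * x)))) =
      (p : ℂ) ^ (β * n) * (2 / (Nat.totient (p ^ β) : ℂ)) *
        ∑ χ : DirichletCharacter ℂ (p ^ β),
          if χ.IsPrimitive ∧ χ.Even then
            (starRingEnd ℂ) (χ (m : ZMod (p ^ β)))
          else 0 := by
  have hu : IsUnit (m : ZMod (p ^ β)) := by
    have hm' : IsCoprime m ((p ^ β : ℕ) : ℤ) := by exact_mod_cast hm.pow_right
    exact ZMod.coe_unitOfIsCoprime m hm' ▸ Units.isUnit _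
  simp only [mul_add, sum_add_distrib, ← neg_mul]
  rw [sum_Kl_mul_Kl_mul n hu, sum_Kl_mul_Kl_mul n hu.neg, ← mul_add, ← sum_add_distrib]
  simp only [← add_mul, inv_add_inv_neg_mul_gaussSum_mul_pow hβ (by omega : n ≠ 0),
    starRingEnd_apply, MulChar.star_apply', mul_sum]
  refine sum_congr rfl fun χ _ => ?_
  split_ifs
  · ring
  · simp
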